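/- arXiv:1106.6014 — 2 statements merged into one kernel-verified Lean document; each statement's English description precedes it below -/
import Mathlib

section
/- Let E and F be reproducing kernel Hilbert spaces of functions on the same set M with kernels K_E and K_F. Then the function K(x,y) = K_E(x,y)·K_F(x,y) is the reproducing kernel of the space G of restrictions to the diagonal of elements of E ⊗ F, where the norm of g ∈ G is the minimum of the norms of elements of E ⊗ F restricting to g. -/
open scoped ComplexConjugate ComplexInnerProductSpace

/-!
The restriction to the diagonal induces a surjection `S : T → G`, and `G` carries the quotient
norm of `S`. By Pythagoras, `S` is then isometric on `(ker S)ᗮ`, so `⟪S k, S h⟫ = ⟪k, h⟫` whenever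
`h ⊥ ker S`. Every `g ∈ G` is `S h` for such an `h`, hence for `k` the kernel section of `T`
at `(y, y)`:  `g y = h (y, y) = ⟪k, h⟫ = ⟪S k, g⟫`, and `S k` is the restriction
`x ↦ K_E(x, y) K_F(x, y)` of `k`.
-/

open scoped InnerProductSpace

namespace LinearMap

variable {𝕜 E F : Type*} [RCLike 𝕜]
  [NormedAddCommGroup E] [InnerProductSpace 𝕜 E] [NormedAddCommGroup F] [InnerProductSpace 𝕜 F]

def IsQuotientNorm (S : E →ₗ[𝕜] F) : Prop :=
  ∀ y : F, ‖y‖ = sInf {r : ℝ | ∃ x : E, S x = y ∧ ‖x‖ = r}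

namespace IsQuotientNorm

variable {S : E →ₗ[𝕜] F}

theorem norm_apply_le (hS : S.IsQuotientNorm) (x : E) : ‖S x‖ ≤ ‖x‖ := by
  rw [hS (S x)]
  refine csInf_le ⟨0, ?_⟩ ⟨x, rfl, rfl⟩
  rintro r ⟨x', -, rfl⟩
  exact norm_nonneg x'

theorem isClosed_ker (hS : S.IsQuotientNorm) : IsClosed (ker S : Set E) :=
  (S.mkContinuous 1 fun x => by simpa using hS.norm_apply_le x).isClosed_ker

theorem norm_apply_of_mem_orthogonal_ker (hS : S.IsQuotientNorm) {x : E}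
    (hx : x ∈ (ker S)ᗮ) : ‖S x‖ = ‖x‖ := by
  refine le_antisymm (hS.norm_apply_le x) ?_
  rw [hS (S x)]
  refine le_csInf ⟨‖x‖, x, rfl, rfl⟩ ?_
  rintro r ⟨x', hx', rfl⟩
  have hker : x' - x ∈ ker S := by rw [mem_ker, map_sub, hx', sub_self]
  have hpyth : ‖x'‖ ^ 2 = ‖x' - x‖ ^ 2 + ‖x‖ ^ 2 := by
    simpa [hx _ hker] using norm_add_sq (𝕜 := 𝕜) (x' - x) x
  nlinarith [norm_nonneg x, norm_nonneg x', sq_nonneg ‖x' - x‖]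

theorem exists_mem_orthogonal_ker_apply_eq [CompleteSpace E] (hS : S.IsQuotientNorm) (x : E) :
    ∃ x₀ ∈ (ker S)ᗮ, S x₀ = S x := by
  have : CompleteSpace (ker S) := hS.isClosed_ker.completeSpace_coe
  obtain ⟨n, hn, x₀, hx₀, rfl⟩ := (ker S).exists_add_mem_mem_orthogonal x
  exact ⟨x₀, hx₀, by rw [map_add, mem_ker.mp hn, zero_add]⟩

theorem inner_apply_apply_of_mem_orthogonal_ker [CompleteSpace E] (hS : S.IsQuotientNorm)
    (x : E) {y : E} (hy : y ∈ (ker S)ᗮ) : ⟪S x, S y⟫_𝕜 = ⟪x, y⟫_𝕜 := by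
  obtain ⟨x₀, hx₀, hSx₀⟩ := hS.exists_mem_orthogonal_ker_apply_eq x
  let S₀ : (ker S)ᗮ →ₗᵢ[𝕜] F :=
    { toLinearMap := S ∘ₗ (ker S)ᗮ.subtype
      norm_map' := fun z => hS.norm_apply_of_mem_orthogonal_ker z.2 }
  have hx_sub : x₀ - x ∈ ker S := by rw [mem_ker, map_sub, hSx₀, sub_self]
  calc ⟪S x, S y⟫_𝕜 = ⟪x₀, y⟫_𝕜 := by rw [← hSx₀]; exact S₀.inner_map_map ⟨x₀, hx₀⟩ ⟨y, hy⟩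
    _ = ⟪x, y⟫_𝕜 := by
      rw [← sub_eq_zero, ← inner_sub_left, hy _ hx_sub]

end IsQuotientNorm

end LinearMap

theorem diagonal_product_reproducing_kernel_general
    {M T G : Type*}
    [NormedAddCommGroup T] [InnerProductSpace ℂ T] [CompleteSpace T]
    [NormedAddCommGroup G] [InnerProductSpace ℂ G]
    (KE KF : M → M → ℂ)
    (toT : T →ₗ[ℂ] (M × M → ℂ)) (KTfun : M × M → T)
    (hKT : ∀ p q : M × M, toT (KTfun q) p = KE p.1 q.1 * KF p.2 q.2)
    (hreprT : ∀ (h : T) (q : M × M), toT h q = ⟪KTfun q, h⟫)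
    (toG : G →ₗ[ℂ] (M → ℂ)) (hinj : Function.Injective toG)
    (hrange : Set.range toG = Set.range fun h : T => fun x : M => toT h (x, x))
    (hnorm : ∀ g : G,
      ‖g‖ = sInf {r : ℝ | ∃ h : T, (∀ x : M, toT h (x, x) = toG g x) ∧ ‖h‖ = r}) :
    ∃ KGfun : M → G,
      (∀ x y : M, toG (KGfun y) x = KE x y * KF x y) ∧
      (∀ (g : G) (y : M), toG g y = ⟪KGfun y, g⟫) := by
  let Δ : T →ₗ[ℂ] (M → ℂ) := LinearMap.funLeft ℂ ℂ (fun x : M => (x, x)) ∘ₗ toT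
  have hΔ : ∀ h, Δ h ∈ LinearMap.range toG := fun h => by
    rw [LinearMap.mem_range, ← Set.mem_range, hrange]; exact ⟨h, rfl⟩
  let S : T →ₗ[ℂ] G := (LinearEquiv.ofInjective toG hinj).symm ∘ₗ Δ.codRestrict _ hΔ
  have hS : ∀ h, toG (S h) = Δ h := fun h =>
    LinearEquiv.ofInjective_symm_apply (f := toG) (h := hinj) _
  have hS_eq : ∀ h g, S h = g ↔ ∀ x, toT h (x, x) = toG g x := fun h g => by
    rw [← hinj.eq_iff, hS, funext_iff]; rfl
  have hquot : S.IsQuotientNorm := fun g => by simpa only [hS_eq] using hnorm g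
  refine ⟨fun y => S (KTfun (y, y)),
    fun x y => (congrFun (hS _) x).trans (hKT (x, x) (y, y)), fun g y => ?_⟩
  obtain ⟨h, hh⟩ : ∃ h, S h = g := by
    obtain ⟨h, hh⟩ : toG g ∈ Set.range fun h : T => fun x : M => toT h (x, x) :=
      hrange ▸ ⟨g, rfl⟩
    exact ⟨h, (hS_eq h g).mpr (congrFun hh)⟩
  obtain ⟨h₀, hh₀, hSh₀⟩ := hquot.exists_mem_orthogonal_ker_apply_eq h
  rw [← hh, ← hSh₀, hquot.inner_apply_apply_of_mem_orthogonal_ker _ hh₀, ← hreprT]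
  exact congrFun (hS h₀) y

/-- Aronszajn: if `E`, `F` are RKHS of functions on the same set `M` with
kernels `K_E`, `K_F`, then `K(x,y) = K_E(x,y) K_F(x,y)` is the reproducing kernel of the
space `G` of restrictions to the diagonal of elements of `E ⊗ F` (realized here as a
Hilbert space `T` of functions on `M × M` with kernel `K_E(x₁,y₁)K_F(x₂,y₂)`), where the
norm of `g ∈ G` is the infimum (minimum) of the norms of elements of `T` restricting to
`g` on the diagonal. -/
theorem diagonal_product_reproducing_kernel
    {M T G : Type*}
    [NormedAddCommGroup T] [InnerProductSpace ℂ T] [CompleteSpace T]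
    [NormedAddCommGroup G] [InnerProductSpace ℂ G] [CompleteSpace G]
    (KE KF : M → M → ℂ)
    (toT : T →ₗ[ℂ] (M × M → ℂ)) (KTfun : M × M → T)
    (hKT : ∀ p q : M × M, toT (KTfun q) p = KE p.1 q.1 * KF p.2 q.2)
    (hreprT : ∀ (h : T) (q : M × M), toT h q = ⟪KTfun q, h⟫)
    (toG : G →ₗ[ℂ] (M → ℂ)) (hinj : Function.Injective toG)
    (hrange : Set.range toG = Set.range fun h : T => fun x : M => toT h (x, x))
    (hnorm : ∀ g : G,
      ‖g‖ = sInf {r : ℝ | ∃ h : T, (∀ x : M, toT h (x, x) = toG g x) ∧ ‖h‖ = r}) :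
    ∃ KGfun : M → G,
      (∀ x y : M, toG (KGfun y) x = KE x y * KF x y) ∧
      (∀ (g : G) (y : M), toG g y = ⟪KGfun y, g⟫) :=
  diagonal_product_reproducing_kernel_general KE KF toT KTfun hKT hreprT toG hinj hrange hnorm
end

section
/- The product operation on reproducing kernel Hilbert spaces of functions on a fixed set M (defined via restriction of the tensor product to the diagonal with minimal-norm quotient inner product) is associative: E(FG) = (EF)G as inner product spaces. -/
/-!
Both spaces are reproducing kernel Hilbert spaces for the same kernel
`(K_E K_F) K_G = K_E (K_F K_G)`, and such a space is determined by its kernel: the kernel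
functions of `A` and of `B` have the same Gram matrix, so `k_A y ↦ k_B y` extends, by density of
the kernel functions, to a linear isometry `A → B`, and this isometry commutes with evaluation at
points because evaluation is the inner product with a kernel function.
-/

open scoped InnerProductSpace ComplexInnerProductSpace

section GramExtension

variable {𝕜 ι E F : Type*} [RCLike 𝕜]
  [NormedAddCommGroup E] [InnerProductSpace 𝕜 E] [NormedAddCommGroup F] [InnerProductSpace 𝕜 F]

theorem inner_linearCombination_eq_of_inner_eq {u : ι → E} {v : ι → F}
    (huv : ∀ i j, ⟪u i, u j⟫_𝕜 = ⟪v i, v j⟫_𝕜) (c d : ι →₀ 𝕜) :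
    ⟪Finsupp.linearCombination 𝕜 u c, Finsupp.linearCombination 𝕜 u d⟫_𝕜 =
      ⟪Finsupp.linearCombination 𝕜 v c, Finsupp.linearCombination 𝕜 v d⟫_𝕜 := by
  simp only [Finsupp.linearCombination_apply, Finsupp.sum_inner, Finsupp.inner_sum,
    inner_smul_left, inner_smul_right, huv]

theorem norm_linearCombination_eq_of_inner_eq {u : ι → E} {v : ι → F}
    (huv : ∀ i j, ⟪u i, u j⟫_𝕜 = ⟪v i, v j⟫_𝕜) (c : ι →₀ 𝕜) :
    ‖Finsupp.linearCombination 𝕜 v c‖ = ‖Finsupp.linearCombination 𝕜 u c‖ := by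
  rw [norm_eq_sqrt_re_inner (𝕜 := 𝕜), norm_eq_sqrt_re_inner (𝕜 := 𝕜),
    inner_linearCombination_eq_of_inner_eq huv]

theorem exists_linearIsometry_of_inner_eq [CompleteSpace F] {u : ι → E} {v : ι → F}
    (hu : DenseRange (Finsupp.linearCombination 𝕜 u))
    (huv : ∀ i j, ⟪u i, u j⟫_𝕜 = ⟪v i, v j⟫_𝕜) :
    ∃ T : E →ₗᵢ[𝕜] F, ∀ i, T (u i) = v i := by
  have hbound : ∃ C, ∀ c, ‖Finsupp.linearCombination 𝕜 v c‖ ≤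
      C * ‖Finsupp.linearCombination 𝕜 u c‖ :=
    ⟨1, fun c => by rw [one_mul, norm_linearCombination_eq_of_inner_eq huv]⟩
  set T := (Finsupp.linearCombination 𝕜 v).extendOfNorm (Finsupp.linearCombination 𝕜 u)
  have hT : ∀ c, T (Finsupp.linearCombination 𝕜 u c) = Finsupp.linearCombination 𝕜 v c :=
    LinearMap.extendOfNorm_eq hu hbound
  have hinner : ∀ x y, ⟪T x, T y⟫_𝕜 = ⟪x, y⟫_𝕜 := by
    refine hu.induction_on₂ (isClosed_eq (by fun_prop) (by fun_prop)) fun c d => ?_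
    rw [hT, hT, inner_linearCombination_eq_of_inner_eq huv]
  refine ⟨T.toLinearMap.isometryOfInner hinner, fun i => ?_⟩
  simpa using hT (Finsupp.single i 1)

end GramExtension

def HasReproducingKernel {𝕜 M E : Type*} [RCLike 𝕜] [NormedAddCommGroup E]
    [InnerProductSpace 𝕜 E] (toFun : E →ₗ[𝕜] M → 𝕜) (k : M → E) : Prop :=
  ∀ f y, toFun f y = ⟪k y, f⟫_𝕜

namespace HasReproducingKernel

variable {𝕜 M E F : Type*} [RCLike 𝕜]
  [NormedAddCommGroup E] [InnerProductSpace 𝕜 E] [NormedAddCommGroup F] [InnerProductSpace 𝕜 F]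
  {toE : E →ₗ[𝕜] M → 𝕜} {kE : M → E} {toF : F →ₗ[𝕜] M → 𝕜} {kF : M → F}

theorem denseRange_linearCombination [CompleteSpace E] (hE : HasReproducingKernel toE kE)
    (hinj : Function.Injective toE) : DenseRange (Finsupp.linearCombination 𝕜 kE) := by
  rw [DenseRange, ← LinearMap.coe_range, Finsupp.range_linearCombination,
    Submodule.dense_iff_topologicalClosure_eq_top, Submodule.topologicalClosure_eq_top_iff,
    Submodule.eq_bot_iff]
  refine fun f hf => hinj (funext fun y => ?_)
  rw [hE, map_zero]
  exact Submodule.inner_right_of_mem_orthogonal (Submodule.subset_span (Set.mem_range_self y)) hf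

theorem exists_linearIsometry_comp_eq [CompleteSpace E] [CompleteSpace F]
    (hE : HasReproducingKernel toE kE) (hinj : Function.Injective toE)
    (hF : HasReproducingKernel toF kF)
    (hkernel : ∀ x y, toE (kE y) x = toF (kF y) x) :
    ∃ T : E →ₗᵢ[𝕜] F, ∀ f, toF (T f) = toE f := by
  have hgram : ∀ x y, ⟪kE x, kE y⟫_𝕜 = ⟪kF x, kF y⟫_𝕜 := fun x y => by
    rw [← hE, ← hF, hkernel]
  obtain ⟨T, hT⟩ := exists_linearIsometry_of_inner_eq (hE.denseRange_linearCombination hinj) hgram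
  refine ⟨T, fun f => funext fun y => ?_⟩
  rw [hF, hE, ← hT, T.inner_map_map]

end HasReproducingKernel

/-- the RKHS product (restriction of the tensor product to the diagonal,
equivalently the RKHS whose kernel is the pointwise product of the kernels) is
associative: `E(FG) = (EF)G` as inner product spaces of functions on `M`.  Here `A`
realizes `(EF)G` (an RKHS with kernel `(K_E·K_F)·K_G`) and `B` realizes `E(FG)` (an RKHS
with kernel `K_E·(K_F·K_G)`); the conclusion is that `A` and `B` consist of the same
functions on `M`, with the same inner product. -/
theorem rkhs_product_assoc
    {M A B : Type*}
    [NormedAddCommGroup A] [InnerProductSpace ℂ A] [CompleteSpace A]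
    [NormedAddCommGroup B] [InnerProductSpace ℂ B] [CompleteSpace B]
    (KE KF KG : M → M → ℂ)
    (toA : A →ₗ[ℂ] (M → ℂ)) (hinjA : Function.Injective toA)
    (KAfun : M → A)
    (hKA : ∀ x y : M, toA (KAfun y) x = (KE x y * KF x y) * KG x y)
    (hreprA : ∀ (a : A) (y : M), toA a y = ⟪KAfun y, a⟫)
    (toB : B →ₗ[ℂ] (M → ℂ)) (hinjB : Function.Injective toB)
    (KBfun : M → B)
    (hKB : ∀ x y : M, toB (KBfun y) x = KE x y * (KF x y * KG x y))
    (hreprB : ∀ (b : B) (y : M), toB b y = ⟪KBfun y, b⟫) :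
    Set.range toA = Set.range toB ∧
    ∀ (a a' : A) (b b' : B), toA a = toB b → toA a' = toB b' →
      (⟪a, a'⟫ : ℂ) = ⟪b, b'⟫ := by
  have hkernel : ∀ x y, toA (KAfun y) x = toB (KBfun y) x := fun x y => by
    rw [hKA, hKB, mul_assoc]
  obtain ⟨T, hT⟩ :=
    HasReproducingKernel.exists_linearIsometry_comp_eq hreprA hinjA hreprB hkernel
  obtain ⟨S, hS⟩ := HasReproducingKernel.exists_linearIsometry_comp_eq hreprB hinjB hreprA
    fun x y => (hkernel x y).symm
  refine ⟨Set.Subset.antisymm ?_ ?_, fun a a' b b' hab hab' => ?_⟩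
  · rintro _ ⟨a, rfl⟩
    exact ⟨T a, hT a⟩
  · rintro _ ⟨b, rfl⟩
    exact ⟨S b, hS b⟩
  · obtain rfl : T a = b := hinjB (by rw [hT, hab])
    obtain rfl : T a' = b' := hinjB (by rw [hT, hab'])
    exact (T.inner_map_map a a').symm
end
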